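/- arXiv:2002.04710 — 3 statements merged into one kernel-verified Lean document; each statement's English description precedes it below -/
import Mathlib

section
/- The minimal value over all w ∈ ℝ^m with ∏_{j=1}^m w_j = τ (τ ≠ 0) of 2σ̂_x²τ² ∑_{j=1}^m 1/w_j² equals 2 m σ̂_x² |τ|^{2(1−1/m)}. -/
/-!
By AM–GM, `∑ 1/wⱼ² ≥ m (∏ 1/wⱼ²)^(1/m) = m |τ|^(-2/m)` whenever `∏ wⱼ = τ`, with equality when all
`|wⱼ|` equal `|τ|^(1/m)`; such a factorization exists (put the sign of `τ` on one factor). Multiplying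
by `2σ̂²τ²` gives the value `2mσ̂²|τ|^(2 - 2/m)`.
-/

open Finset Real

theorem card_mul_prod_rpow_inv_card_le_sum {ι : Type*} {s : Finset ι} (hs : s.Nonempty)
    {z : ι → ℝ} (hz : ∀ i ∈ s, 0 ≤ z i) :
    (#s : ℝ) * (∏ i ∈ s, z i) ^ (#s : ℝ)⁻¹ ≤ ∑ i ∈ s, z i := by
  have hcard : (0 : ℝ) < #s := by exact_mod_cast hs.card_pos
  have := geom_mean_le_arith_mean s (fun _ ↦ 1) z (fun _ _ ↦ zero_le_one) (by simpa using hcard) hz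
  simp only [rpow_one, sum_const, nsmul_eq_mul, mul_one, one_mul] at this
  rwa [le_div_iff₀ hcard, mul_comm] at this

theorem card_div_rpow_le_sum_one_div_sq {ι : Type*} [Fintype ι] [Nonempty ι] {w : ι → ℝ}
    {τ : ℝ} (hw : ∏ i, w i = τ) :
    (Fintype.card ι : ℝ) / |τ| ^ (2 / (Fintype.card ι : ℝ)) ≤ ∑ i, 1 / w i ^ 2 := by
  have hprod : ∏ i, 1 / w i ^ 2 = (|τ| ^ (2 : ℝ))⁻¹ := by
    rw [prod_div_distrib, prod_const_one, prod_pow, hw, rpow_two, sq_abs, one_div]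
  have := card_mul_prod_rpow_inv_card_le_sum (z := fun i ↦ 1 / w i ^ 2) univ_nonempty
    fun i _ ↦ by positivity
  rwa [hprod, inv_rpow (by positivity), ← rpow_mul (abs_nonneg τ), card_univ, ← div_eq_mul_inv,
    ← div_eq_mul_inv] at this

theorem sum_one_div_sq_of_abs_eq_rpow {ι : Type*} [Fintype ι] {w : ι → ℝ} {τ : ℝ}
    (hw : ∀ i, |w i| = |τ| ^ (Fintype.card ι : ℝ)⁻¹) :
    ∑ i, 1 / w i ^ 2 = (Fintype.card ι : ℝ) / |τ| ^ (2 / (Fintype.card ι : ℝ)) := by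
  have hterm : ∀ i, 1 / w i ^ 2 = 1 / |τ| ^ (2 / (Fintype.card ι : ℝ)) := fun i ↦ by
    rw [← sq_abs, hw, ← rpow_natCast, ← rpow_mul (abs_nonneg τ), Nat.cast_ofNat, inv_mul_eq_div]
  simp only [hterm, sum_const, card_univ, nsmul_eq_mul, mul_one_div]

theorem exists_prod_eq_forall_abs_eq_rpow {m : ℕ} (hm : 0 < m) {τ : ℝ} (hτ : τ ≠ 0) :
    ∃ w : Fin m → ℝ, ∏ j, w j = τ ∧ ∀ j, |w j| = |τ| ^ (m : ℝ)⁻¹ := by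
  obtain ⟨n, rfl⟩ := Nat.exists_eq_add_one_of_ne_zero hm.ne'
  set c := |τ| ^ ((n + 1 : ℕ) : ℝ)⁻¹
  have hc : 0 ≤ c := by positivity
  refine ⟨Fin.cons (SignType.sign τ * c) fun _ ↦ c, ?_, ?_⟩
  · rw [Fin.prod_cons, prod_const, card_univ, Fintype.card_fin, mul_assoc, ← pow_succ',
      rpow_inv_natCast_pow (abs_nonneg τ) (Nat.succ_ne_zero n), sign_mul_abs]
  · refine Fin.cases ?_ fun _ ↦ by simp [abs_of_nonneg hc]
    rcases hτ.lt_or_gt with hneg | hpos <;> simp [abs_of_nonneg hc, *]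

theorem sq_mul_div_abs_rpow {τ : ℝ} (hτ : τ ≠ 0) (x : ℝ) :
    τ ^ 2 * (x / |τ| ^ (2 / x)) = x * |τ| ^ (2 * (1 - 1 / x)) := by
  have habs : 0 < |τ| := abs_pos.mpr hτ
  rw [show 2 * (1 - 1 / x) = 2 - 2 / x by ring, rpow_sub habs, rpow_two, sq_abs]
  ring

/-- Minimal sharpness over global minima of a scalar `m`-layer linear network:
the least value of `2σ̂²τ² ∑ 1/wⱼ²` over all `w` with `∏ wⱼ = τ` is
`2 m σ̂² |τ|^(2(1-1/m))`. -/
theorem stmt4 (m : ℕ) (hm : 0 < m) (σ2 τ : ℝ) (hσ : 0 < σ2) (hτ : τ ≠ 0) :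
    IsLeast {r : ℝ | ∃ w : Fin m → ℝ, (∏ j, w j) = τ ∧
        r = 2 * σ2 * τ ^ 2 * ∑ j, 1 / (w j) ^ 2}
      (2 * m * σ2 * |τ| ^ (2 * (1 - 1 / (m : ℝ)))) := by
  have hmin : 2 * m * σ2 * |τ| ^ (2 * (1 - 1 / (m : ℝ))) =
      2 * σ2 * τ ^ 2 * (m / |τ| ^ (2 / (m : ℝ))) := by
    rw [mul_assoc _ (τ ^ 2), sq_mul_div_abs_rpow hτ]; ring
  have : NeZero m := ⟨hm.ne'⟩
  refine ⟨?_, ?_⟩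
  · obtain ⟨w, hw, habs⟩ := exists_prod_eq_forall_abs_eq_rpow hm hτ
    refine ⟨w, hw, ?_⟩
    rw [hmin, sum_one_div_sq_of_abs_eq_rpow (by simpa using habs), Fintype.card_fin]
  · rintro r ⟨w, hw, rfl⟩
    rw [hmin]
    gcongr
    simpa using card_div_rpow_le_sum_one_div_sq hw
end

section
/- Let T ∈ ℝ^{d×d} with singular values σ_1 ≥ ⋯ ≥ σ_d > 0, and let S^α denote the diagonal matrix diag(σ_1^α, …, σ_d^α). Then max over B̃ ∈ ℝ^{d×d} with ‖B̃‖_F = 1 of ∑_{k=1}^m ‖S^{(m−k)/m} B̃ S^{(k−1)/m}‖_F² equals m · σ_1^{2(1−1/m)}. -/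
/-!
Conjugating by diagonal matrices only reweights the entries of `B̃`, so the objective is
`∑ᵢⱼ wᵢⱼ B̃ᵢⱼ²` with `wᵢⱼ = ∑ₖ σᵢ^(2(m-k-1)/m) σⱼ^(2k/m)`. As `B̃ᵢⱼ²` ranges over the simplex,
this linear function is maximized at the largest weight, which is `w₁₁ = m σ₁^(2(1-1/m))`
since every summand is at most `σ₁^(2(1-1/m))`.
-/

/-- The Frobenius norm of a real matrix. -/
noncomputable def frobNorm {m n : Type*} [Fintype m] [Fintype n]
    (A : Matrix m n ℝ) : ℝ :=
  Real.sqrt (∑ i, ∑ j, (A i j) ^ 2)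

open Matrix

section Frobenius

variable {m n : Type*} [Fintype m] [Fintype n]

lemma frobNorm_sq (A : Matrix m n ℝ) : frobNorm A ^ 2 = ∑ i, ∑ j, A i j ^ 2 :=
  Real.sq_sqrt (by positivity)

lemma frobNorm_diagonal_mul_mul_diagonal_sq [DecidableEq m] [DecidableEq n]
    (f : m → ℝ) (g : n → ℝ) (B : Matrix m n ℝ) :
    frobNorm (diagonal f * B * diagonal g) ^ 2 = ∑ i, ∑ j, (f i * g j) ^ 2 * B i j ^ 2 := by
  simp only [frobNorm_sq, mul_diagonal, diagonal_mul]
  exact Finset.sum_congr rfl fun i _ => Finset.sum_congr rfl fun j _ => by ring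

lemma sum_frobNorm_diagonal_mul_mul_diagonal_sq [DecidableEq m] [DecidableEq n] {ι : Type*}
    (s : Finset ι) (f : ι → m → ℝ) (g : ι → n → ℝ) (B : Matrix m n ℝ) :
    ∑ k ∈ s, frobNorm (diagonal (f k) * B * diagonal (g k)) ^ 2
      = ∑ i, ∑ j, (∑ k ∈ s, (f k i * g k j) ^ 2) * B i j ^ 2 := by
  simp only [frobNorm_diagonal_mul_mul_diagonal_sq, Finset.sum_mul]
  rw [Finset.sum_comm]
  exact Finset.sum_congr rfl fun i _ => Finset.sum_comm

lemma frobNorm_single_one [DecidableEq m] [DecidableEq n] (a : m) (b : n) :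
    frobNorm (single a b (1 : ℝ)) = 1 := by
  simp [frobNorm, single_apply, ite_and]

lemma isGreatest_weighted_sum_sq_of_frobNorm_eq_one [DecidableEq m] [DecidableEq n]
    (w : m → n → ℝ) {a : m} {b : n} (hmax : ∀ i j, w i j ≤ w a b) :
    IsGreatest {r | ∃ B : Matrix m n ℝ, frobNorm B = 1 ∧ r = ∑ i, ∑ j, w i j * B i j ^ 2}
      (w a b) := by
  refine ⟨⟨single a b 1, frobNorm_single_one a b, ?_⟩, ?_⟩
  · simp [single_apply, ite_and]
  · rintro r ⟨B, hB, rfl⟩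
    have hB2 : ∑ i, ∑ j, B i j ^ 2 = 1 := by rw [← frobNorm_sq, hB, one_pow]
    calc ∑ i, ∑ j, w i j * B i j ^ 2
        ≤ ∑ i, ∑ j, w a b * B i j ^ 2 := by gcongr with i _ j _; exact hmax i j
      _ = w a b := by simp only [← Finset.mul_sum, hB2, mul_one]

end Frobenius

noncomputable def balancedWeight (m : ℕ) (x y : ℝ) : ℝ :=
  ∑ k ∈ Finset.range m, (x ^ (((m : ℝ) - (k + 1)) / m) * y ^ ((k : ℝ) / m)) ^ 2

lemma balancedWeight_le {m : ℕ} {x y s : ℝ} (hx : 0 ≤ x) (hy : 0 ≤ y) (hxs : x ≤ s)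
    (hys : y ≤ s) : balancedWeight m x y ≤ balancedWeight m s s := by
  refine Finset.sum_le_sum fun k hk => ?_
  have hkm : (k : ℝ) + 1 ≤ m := by exact_mod_cast Finset.mem_range.mp hk
  have hs : 0 ≤ s := hx.trans hxs
  gcongr

lemma balancedWeight_self {m : ℕ} {s : ℝ} (hs : 0 < s) :
    balancedWeight m s s = m * s ^ (2 * (1 - 1 / (m : ℝ))) := by
  have hterm : ∀ k ∈ Finset.range m,
      (s ^ (((m : ℝ) - (k + 1)) / m) * s ^ ((k : ℝ) / m)) ^ 2 = s ^ (2 * (1 - 1 / (m : ℝ))) := by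
    intro k hk
    have hm : (m : ℝ) ≠ 0 := by
      have := Finset.mem_range.mp hk
      norm_cast
      omega
    rw [← Real.rpow_add hs, ← Real.rpow_natCast, ← Real.rpow_mul hs.le]
    congr 1
    field_simp
    ring
  rw [balancedWeight, Finset.sum_congr rfl hterm, Finset.sum_const, Finset.card_range,
    nsmul_eq_mul]

theorem stmt9_general (d m : ℕ) (hd : 0 < d) (σ : Fin d → ℝ)
    (hpos : ∀ i, 0 < σ i) (hmono : ∀ i j : Fin d, i ≤ j → σ j ≤ σ i) :
    IsGreatest {r : ℝ | ∃ B : Matrix (Fin d) (Fin d) ℝ, frobNorm B = 1 ∧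
        r = ∑ k ∈ Finset.range m,
          frobNorm (Matrix.diagonal (fun i => σ i ^ (((m : ℝ) - (k + 1)) / m)) * B *
            Matrix.diagonal (fun i => σ i ^ ((k : ℝ) / m))) ^ 2}
      ((m : ℝ) * σ ⟨0, hd⟩ ^ (2 * (1 - 1 / (m : ℝ)))) := by
  have hmax : ∀ i, σ i ≤ σ ⟨0, hd⟩ := fun i => hmono _ i (Fin.mk_le_mk.mpr (Nat.zero_le _))
  simp only [sum_frobNorm_diagonal_mul_mul_diagonal_sq]
  rw [← balancedWeight_self (hpos _)]
  exact isGreatest_weighted_sum_sq_of_frobNorm_eq_one (fun i j => balancedWeight m (σ i) (σ j))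
    fun i j => balancedWeight_le (hpos i).le (hpos j).le (hmax i) (hmax j)

/-- At the canonical balanced solution: the maximum over Frobenius-unit-norm `B̃`
of `∑_{k=1}^m ‖S^((m-k)/m) B̃ S^((k-1)/m)‖_F²` equals `m · σ₁^(2(1-1/m))`. -/
theorem stmt9 (d m : ℕ) (hd : 0 < d) (hm : 1 ≤ m) (σ : Fin d → ℝ)
    (hpos : ∀ i, 0 < σ i) (hmono : ∀ i j : Fin d, i ≤ j → σ j ≤ σ i) :
    IsGreatest {r : ℝ | ∃ B : Matrix (Fin d) (Fin d) ℝ, frobNorm B = 1 ∧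
        r = ∑ k ∈ Finset.range m,
          frobNorm (Matrix.diagonal (fun i => σ i ^ (((m : ℝ) - (k + 1)) / m)) * B *
            Matrix.diagonal (fun i => σ i ^ ((k : ℝ) / m))) ^ 2}
      ((m : ℝ) * σ ⟨0, hd⟩ ^ (2 * (1 - 1 / (m : ℝ)))) :=
  stmt9_general d m hd σ hpos hmono
end

section
/- Let T ∈ ℝ^{d×d} be a matrix and suppose square matrices W_1, …, W_m satisfy W_m⋯W_1 = T and W_i W_iᵀ = W_{i+1}ᵀ W_{i+1} for all i = 1,…,m−1. Then all W_i have the same singular values, and these are the m-th roots of the singular values of T. -/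
open Matrix Polynomial

/-!
Since `AB` and `BA` have the same characteristic polynomial, the balance condition
`W i * (W i)ᵀ = (W (i+1))ᵀ * W (i+1)` shows that all Gram matrices `(W i)ᵀ * W i` and
`W (m-1) * (W (m-1))ᵀ` share one spectrum. Pushing each factor through the balance condition
telescopes `T * Tᵀ` into `(W (m-1) * (W (m-1))ᵀ) ^ m`, so the eigenvalues of `Tᵀ * T` are the
`m`-th powers of that common spectrum, matched up to a permutation by sorting.
-/

theorem Multiset.exists_equiv_apply_eq_of_map_univ_eq {α : Type*} [LinearOrder α] {n : ℕ}
    {f g : Fin n → α} (h : Multiset.map f Finset.univ.val = Multiset.map g Finset.univ.val) :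
    ∃ e : Fin n ≃ Fin n, ∀ j, f j = g (e j) := by
  have hperm : List.Perm (List.ofFn f) (List.ofFn g) := by
    rwa [← Multiset.coe_eq_coe, List.ofFn_eq_map, List.ofFn_eq_map,
      ← Multiset.map_coe, ← Multiset.map_coe]
  have hsorted : f ∘ Tuple.sort f = g ∘ Tuple.sort g :=
    List.ofFn_injective <| List.Perm.eq_of_sortedLE
      (Tuple.monotone_sort f).sortedLE_ofFn (Tuple.monotone_sort g).sortedLE_ofFn <|
      ((Tuple.sort f).ofFn_comp_perm f).trans <| hperm.trans ((Tuple.sort g).ofFn_comp_perm g).symm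
  exact ⟨(Tuple.sort f).symm.trans (Tuple.sort g), fun j => by
    simpa using congrFun hsorted ((Tuple.sort f).symm j)⟩

theorem Polynomial.map_univ_eq_of_prod_X_sub_C_eq {K ι : Type*} [Field K] [Fintype ι]
    {f g : ι → K} (h : ∏ i, (X - C (f i)) = ∏ i, (X - C (g i))) :
    Multiset.map f Finset.univ.val = Multiset.map g Finset.univ.val := by
  have hroots (f : ι → K) : (∏ i, (X - C (f i))).roots = Multiset.map f Finset.univ.val := by
    rw [Polynomial.roots_prod _ _ (Finset.prod_ne_zero_iff.mpr fun i _ => X_sub_C_ne_zero (f i))]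
    simp
  rw [← hroots f, ← hroots g, h]

theorem Matrix.IsHermitian.charpoly_pow {𝕜 n : Type*} [RCLike 𝕜] [Fintype n] [DecidableEq n]
    {A : Matrix n n 𝕜} (hA : A.IsHermitian) (k : ℕ) :
    (A ^ k).charpoly = ∏ i, (X - C ((hA.eigenvalues i ^ k : ℝ) : 𝕜)) := by
  rw [← cfc_pow_id (R := ℝ) A k hA.isSelfAdjoint, hA.charpoly_cfc_eq]

section Balanced

variable {n R : Type*} [Fintype n] [DecidableEq n] [CommRing R] {m : ℕ} {W : ℕ → Matrix n n R}

theorem charpoly_transpose_mul_self_eq_of_balanced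
    (hbal : ∀ i, i + 1 < m → W i * (W i)ᵀ = (W (i + 1))ᵀ * W (i + 1)) :
    ∀ i < m, ((W i)ᵀ * W i).charpoly = ((W 0)ᵀ * W 0).charpoly
  | 0, _ => rfl
  | i + 1, hi => by
    rw [← hbal i hi, charpoly_mul_comm,
      charpoly_transpose_mul_self_eq_of_balanced hbal i (by omega)]

theorem prod_mul_transpose_prod_eq_pow_of_balanced
    (hbal : ∀ i, i + 1 < m → W i * (W i)ᵀ = (W (i + 1))ᵀ * W (i + 1)) :
    ∀ k < m, (List.ofFn fun i : Fin (k + 1) => W i).reverse.prod *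
      ((List.ofFn fun i : Fin (k + 1) => W i).reverse.prod)ᵀ = (W k * (W k)ᵀ) ^ (k + 1)
  | 0, _ => by simp
  | k + 1, hk => by
    set P := (List.ofFn fun i : Fin (k + 1) => W i).reverse.prod
    have hP : (List.ofFn fun i : Fin (k + 2) => W i).reverse.prod = W (k + 1) * P := by
      rw [List.ofFn_succ']
      simp [P]
    have ih := prod_mul_transpose_prod_eq_pow_of_balanced hbal k (by omega)
    calc (List.ofFn fun i : Fin (k + 2) => W i).reverse.prod *
          ((List.ofFn fun i : Fin (k + 2) => W i).reverse.prod)ᵀ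
        = W (k + 1) * (P * Pᵀ) * (W (k + 1))ᵀ := by
          rw [hP, transpose_mul]; noncomm_ring
      _ = W (k + 1) * ((W (k + 1))ᵀ * W (k + 1)) ^ (k + 1) * (W (k + 1))ᵀ := by
          rw [ih, hbal k hk]
      _ = (W (k + 1) * (W (k + 1))ᵀ) ^ (k + 2) := by
          rw [← mul_pow_mul, mul_assoc, ← pow_succ]

end Balanced

theorem stmt15_general (d m : ℕ) (T : Matrix (Fin d) (Fin d) ℝ)
    (W : ℕ → Matrix (Fin d) (Fin d) ℝ)
    (hprod : ((List.ofFn (fun i : Fin m => W i)).reverse).prod = T)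
    (hbal : ∀ i, i + 1 < m → W i * (W i)ᵀ = (W (i + 1))ᵀ * W (i + 1)) :
    ∀ i < m, ∃ e : Fin d ≃ Fin d, ∀ j,
      (Matrix.isHermitian_conjTranspose_mul_self (W i)).eigenvalues j =
        ((Matrix.isHermitian_conjTranspose_mul_self T).eigenvalues (e j)) ^ ((1 : ℝ) / m) := by
  intro i hi
  obtain ⟨n, rfl⟩ : ∃ n, m = n + 1 := ⟨m - 1, by omega⟩
  set hG := isHermitian_conjTranspose_mul_self (W i)
  set hT := isHermitian_conjTranspose_mul_self T
  have hH : (W n * (W n)ᴴ).IsHermitian := isHermitian_mul_conjTranspose_self (W n)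
  have hGH : hG.eigenvalues = hH.eigenvalues := by
    rw [hG.eigenvalues_eq_eigenvalues_iff hH, charpoly_mul_comm (W n)]
    simp only [conjTranspose_eq_transpose_of_trivial]
    rw [charpoly_transpose_mul_self_eq_of_balanced hbal i hi,
      charpoly_transpose_mul_self_eq_of_balanced hbal n (by omega)]
  have hTH : (Tᴴ * T).charpoly = ((W n * (W n)ᴴ) ^ (n + 1)).charpoly := by
    simp only [conjTranspose_eq_transpose_of_trivial]
    rw [charpoly_mul_comm, ← hprod, prod_mul_transpose_prod_eq_pow_of_balanced hbal n (by omega)]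
  rw [hT.charpoly_eq, hH.charpoly_pow, ← hGH] at hTH
  simp only [RCLike.ofReal_real_eq_id, id] at hTH
  obtain ⟨e, he⟩ := Multiset.exists_equiv_apply_eq_of_map_univ_eq
    (Polynomial.map_univ_eq_of_prod_X_sub_C_eq hTH.symm)
  refine ⟨e, fun j => ?_⟩
  rw [← he j, one_div]
  exact (Real.pow_rpow_inv_natCast (eigenvalues_conjTranspose_mul_self_nonneg (W i) j)
    (Nat.succ_ne_zero n)).symm

/-- Balanced factorizations: if `W_m ⋯ W_1 = T` and `W_i W_iᵀ = W_{i+1}ᵀ W_{i+1}`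
for all `i`, then all `W_i` have the same singular values (with multiplicity),
namely the `m`-th roots of the singular values of `T` (expressed via the
eigenvalues of `WᴴW` and `TᴴT`). -/
theorem stmt15 (d m : ℕ) (hm : 1 ≤ m) (T : Matrix (Fin d) (Fin d) ℝ)
    (W : ℕ → Matrix (Fin d) (Fin d) ℝ)
    (hprod : ((List.ofFn (fun i : Fin m => W i)).reverse).prod = T)
    (hbal : ∀ i, i + 1 < m → W i * (W i)ᵀ = (W (i + 1))ᵀ * W (i + 1)) :
    ∀ i < m, ∃ e : Fin d ≃ Fin d, ∀ j,
      (Matrix.isHermitian_conjTranspose_mul_self (W i)).eigenvalues j =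
        ((Matrix.isHermitian_conjTranspose_mul_self T).eigenvalues (e j)) ^ ((1 : ℝ) / m) :=
  stmt15_general d m T W hprod hbal
end
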